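/- arXiv:1307.6940 — 2 statements merged into one kernel-verified Lean document; each statement's English description precedes it below -/
import Mathlib

section
/- Let A be a strongly Γ-graded ring and n ≥ 3. Then the graded elementary group E_n(A)(α_1,...,α_n), generated by elementary matrices e_{i,j}(r) with r ∈ A_{α_i - α_j} and i ≠ j, is a perfect group: it equals its own commutator subgroup. -/
/-!
Over any ring the elementary matrices satisfy `[e_{i,k}(s), e_{k,j}(t)] = e_{i,j}(st)` for
distinct `i, j, k`, and `r ↦ e_{i,j}(r)` is additive. When `n ≥ 3` every pair `i ≠ j` has a third
index `k`, and strong grading writes each `r ∈ A_{αᵢ - αⱼ}` as a sum of products `st` with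
`s ∈ A_{αᵢ - α_k}`, `t ∈ A_{α_k - αⱼ}`; so every generator of `E_n(A)(α)` is a product of
commutators of generators.
-/

open Pointwise
open scoped commutatorElement

namespace Matrix

variable {ι A : Type*} [DecidableEq ι] [Fintype ι] [Ring A]

theorem single_mul_single_self_of_ne {i j : ι} (hij : i ≠ j) (r s : A) :
    single i j r * single i j s = 0 :=
  single_mul_single_of_ne _ _ _ _ hij.symm _

def elementaryUnit (i j : ι) (hij : i ≠ j) (r : A) : (Matrix ι ι A)ˣ where
  val := 1 + single i j r
  inv := 1 - single i j r
  val_inv := by simp [mul_sub, add_mul, single_mul_single_self_of_ne hij]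
  inv_val := by simp [sub_mul, mul_add, single_mul_single_self_of_ne hij]

variable {i j : ι} (hij : i ≠ j)

@[simp]
theorem val_elementaryUnit (r : A) :
    (elementaryUnit i j hij r : Matrix ι ι A) = 1 + single i j r :=
  rfl

theorem elementaryUnit_zero : elementaryUnit i j hij (0 : A) = 1 :=
  Units.ext <| by simp

theorem elementaryUnit_add (r s : A) :
    elementaryUnit i j hij (r + s) = elementaryUnit i j hij r * elementaryUnit i j hij s :=
  Units.ext <| by
    simp only [val_elementaryUnit, Units.val_mul, single_add, mul_add, add_mul, one_mul, mul_one,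
      single_mul_single_self_of_ne hij, add_zero]
    abel

theorem elementaryUnit_neg (r : A) :
    elementaryUnit i j hij (-r) = (elementaryUnit i j hij r)⁻¹ :=
  eq_inv_of_mul_eq_one_left <| by rw [← elementaryUnit_add, neg_add_cancel, elementaryUnit_zero]

theorem commutatorElement_elementaryUnit {k : ι} (hik : i ≠ k) (hkj : k ≠ j) (s t : A) :
    ⁅elementaryUnit i k hik s, elementaryUnit k j hkj t⁆ = elementaryUnit i j hij (s * t) := by
  rw [commutatorElement_def, mul_inv_eq_iff_eq_mul, mul_inv_eq_iff_eq_mul]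
  refine Units.ext ?_
  simp only [Units.val_mul, val_elementaryUnit, add_mul, mul_add, one_mul, mul_one,
    single_mul_single_same, single_mul_single_of_ne _ _ _ _ hij.symm,
    single_mul_single_of_ne _ _ _ _ hkj.symm, add_zero]
  abel

theorem elementaryUnit_mem_of_mem_closure {H : Subgroup (Matrix ι ι A)ˣ} {S : Set A}
    (hS : ∀ x ∈ S, elementaryUnit i j hij x ∈ H) {r : A} (hr : r ∈ AddSubgroup.closure S) :
    elementaryUnit i j hij r ∈ H := by
  induction hr using AddSubgroup.closure_induction with
  | mem x hx => exact hS x hx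
  | zero => rw [elementaryUnit_zero]; exact one_mem H
  | add x y _ _ hx hy => rw [elementaryUnit_add]; exact mul_mem hx hy
  | neg x _ hx => rw [elementaryUnit_neg]; exact inv_mem hx

theorem elementaryUnit_mem_commutator {k : ι} (hik : i ≠ k) (hkj : k ≠ j)
    {H K : Subgroup (Matrix ι ι A)ˣ} {S T : Set A} (hS : ∀ s ∈ S, elementaryUnit i k hik s ∈ H)
    (hT : ∀ t ∈ T, elementaryUnit k j hkj t ∈ K) {r : A} (hr : r ∈ AddSubgroup.closure (S * T)) :
    elementaryUnit i j hij r ∈ ⁅H, K⁆ := by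
  refine elementaryUnit_mem_of_mem_closure hij ?_ hr
  rintro _ ⟨s, hs, t, ht, rfl⟩
  rw [← commutatorElement_elementaryUnit hij hik hkj]
  exact Subgroup.commutator_mem_commutator (hS s hs) (hT t ht)

end Matrix

open Matrix

/-- The graded elementary subgroup `E_n(A)(α₁,…,αₙ)`: the subgroup of invertible `n × n`
matrices over `A` generated by the elementary matrices `e_{i,j}(r) = 1 + r·E_{ij}` with
`r ∈ A_{αᵢ - αⱼ}` and `i ≠ j`. -/
def gradedElementary {Γ A : Type*} [AddCommGroup Γ] [Ring A] (𝒜 : Γ → AddSubgroup A)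
    (n : ℕ) (α : Fin n → Γ) : Subgroup (Matrix (Fin n) (Fin n) A)ˣ :=
  Subgroup.closure {g : (Matrix (Fin n) (Fin n) A)ˣ | ∃ i j : Fin n, ∃ r : A, i ≠ j ∧ r ∈ 𝒜 (α i - α j) ∧
    g.val = 1 + Matrix.single i j r}

theorem elementaryUnit_mem_gradedElementary {Γ A : Type*} [AddCommGroup Γ] [Ring A]
    {𝒜 : Γ → AddSubgroup A} {n : ℕ} {α : Fin n → Γ} {i j : Fin n} (hij : i ≠ j) {r : A}
    (hr : r ∈ 𝒜 (α i - α j)) : elementaryUnit i j hij r ∈ gradedElementary 𝒜 n α :=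
  Subgroup.subset_closure ⟨i, j, r, hij, hr, rfl⟩

theorem gradedElementary_perfect_general {Γ A : Type*} [AddCommGroup Γ] [Ring A]
    (𝒜 : Γ → AddSubgroup A)
    (hstrong : ∀ lam δ : Γ, AddSubgroup.closure ((𝒜 lam : Set A) * (𝒜 δ : Set A)) = 𝒜 (lam + δ))
    (n : ℕ) (hn : 3 ≤ n) (α : Fin n → Γ) :
    ⁅gradedElementary 𝒜 n α, gradedElementary 𝒜 n α⁆ = gradedElementary 𝒜 n α := by
  refine le_antisymm (Subgroup.commutator_le_self _) <| (Subgroup.closure_le _).mpr ?_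
  rintro g ⟨i, j, r, hij, hr, hg⟩
  obtain ⟨k, hki, hkj⟩ := Fin.exists_ne_and_ne_of_two_lt i j hn
  rw [show g = elementaryUnit i j hij r from Units.ext hg]
  refine elementaryUnit_mem_commutator hij hki.symm hkj
    (fun s hs => elementaryUnit_mem_gradedElementary _ hs)
    (fun t ht => elementaryUnit_mem_gradedElementary _ ht) ?_
  rwa [hstrong, sub_add_sub_cancel]

/-- If `A` is a strongly `Γ`-graded ring and `n ≥ 3`, then the graded elementary group
`E_n(A)(α₁,…,αₙ)` is perfect: it equals its own commutator subgroup. -/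
theorem gradedElementary_perfect {Γ A : Type*} [AddCommGroup Γ] [DecidableEq Γ] [Ring A]
    (𝒜 : Γ → AddSubgroup A) [GradedRing 𝒜]
    (hstrong : ∀ lam δ : Γ, AddSubgroup.closure ((𝒜 lam : Set A) * (𝒜 δ : Set A)) = 𝒜 (lam + δ))
    (n : ℕ) (hn : 3 ≤ n) (α : Fin n → Γ) :
    ⁅gradedElementary 𝒜 n α, gradedElementary 𝒜 n α⁆ = gradedElementary 𝒜 n α :=
  gradedElementary_perfect_general 𝒜 hstrong n hn α
end

section
/- Let A be a strongly Γ-graded ring and α ∈ Γ. Then there exist a finitely generated graded projective A-module P, an integer m, and a graded isomorphism A(α) ⊕ P ≅ A(0)^m. -/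
/-! Strong grading puts `1` in `A_{-α} A_α`, say `1 = ∑ sᵢ tᵢ` with `sᵢ ∈ A_{-α}` and `tᵢ ∈ A_α`.
Right multiplication by the `sᵢ` maps `A(α)` into `A(0)ᵐ` and the combination `v ↦ ∑ vᵢ tᵢ` maps
back, both preserving degrees, and the composite is right multiplication by `∑ sᵢ tᵢ = 1`. -/

open Pointwise

theorem AddSubgroup.exists_fin_sum_mul_eq_of_mem_closure_mul {A : Type*} [Ring A]
    {S T : AddSubgroup A} {x : A} (hx : x ∈ AddSubgroup.closure ((S : Set A) * (T : Set A))) :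
    ∃ (n : ℕ) (s t : Fin n → A), (∀ i, s i ∈ S) ∧ (∀ i, t i ∈ T) ∧ ∑ i, s i * t i = x := by
  rw [← Submodule.span_int_eq_addSubgroupClosure, Submodule.mem_toAddSubgroup,
    Submodule.mem_span_set'] at hx
  obtain ⟨n, k, g, rfl⟩ := hx
  choose s hs t ht hst using fun i => (g i).2
  refine ⟨n, fun i => k i • s i, t, fun i => zsmul_mem (hs i) _, ht, ?_⟩
  simp only [smul_mul_assoc, hst]

theorem Fintype.linearCombination_comp_pi_toSpanSingleton {ι A : Type*} [Fintype ι] [Semiring A]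
    (s t : ι → A) :
    (Fintype.linearCombination A t).comp (LinearMap.pi fun i => LinearMap.toSpanSingleton A A (s i)) =
      LinearMap.toSpanSingleton A A (∑ i, s i * t i) := by
  ext
  simp [Fintype.linearCombination_apply, Finset.mul_sum]

section Graded

variable {Γ A : Type*} [AddCommGroup Γ] [Ring A] {𝒜 : Γ → AddSubgroup A} [SetLike.GradedMul 𝒜]

theorem pi_toSpanSingleton_mem_graded {m : ℕ} {s : Fin m → A} {α lam : Γ}
    (hs : ∀ i, s i ∈ 𝒜 (-α)) {a : A} (ha : a ∈ 𝒜 (α + lam)) (i : Fin m) :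
    (LinearMap.pi fun i => LinearMap.toSpanSingleton A A (s i)) a i ∈ 𝒜 lam := by
  simpa using SetLike.mul_mem_graded ha (hs i)

theorem linearCombination_mem_graded {m : ℕ} {t : Fin m → A} {α lam : Γ}
    (ht : ∀ i, t i ∈ 𝒜 α) {v : Fin m → A} (hv : ∀ i, v i ∈ 𝒜 lam) :
    Fintype.linearCombination A t v ∈ 𝒜 (α + lam) := by
  rw [Fintype.linearCombination_apply, add_comm]
  exact AddSubgroup.sum_mem _ fun i _ => SetLike.mul_mem_graded (hv i) (ht i)

end Graded

/-- Let `A` be a strongly `Γ`-graded ring and `α ∈ Γ`.  Then the shifted module `A(α)` is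
a graded direct summand of a finite free graded module with trivial shifts: there are `m`
and `A`-linear maps `f : A(α) → A(0)ᵐ` and `g : A(0)ᵐ → A(α)` which are degree-preserving
(`A(α)_λ = A_{α+λ}` and `A(0)ᵐ_λ = (A_λ)ᵐ`) with `g ∘ f = id`; equivalently
`A(α) ⊕ P ≅ A(0)ᵐ` with `P = ker g` a finitely generated graded projective module. -/
theorem shifted_module_summand_of_trivially_shifted_free
    {Γ A : Type*} [AddCommGroup Γ] [DecidableEq Γ] [Ring A]
    (𝒜 : Γ → AddSubgroup A) [GradedRing 𝒜]
    (hstrong : ∀ lam δ : Γ, AddSubgroup.closure ((𝒜 lam : Set A) * (𝒜 δ : Set A)) = 𝒜 (lam + δ))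
    (α : Γ) :
    ∃ (m : ℕ) (f : A →ₗ[A] (Fin m → A)) (g : (Fin m → A) →ₗ[A] A),
      (∀ lam : Γ, ∀ a ∈ 𝒜 (α + lam), ∀ i : Fin m, f a i ∈ 𝒜 lam) ∧
      (∀ lam : Γ, ∀ v : Fin m → A, (∀ i : Fin m, v i ∈ 𝒜 lam) → g v ∈ 𝒜 (α + lam)) ∧
      g.comp f = LinearMap.id := by
  have hone : (1 : A) ∈ AddSubgroup.closure ((𝒜 (-α) : Set A) * (𝒜 α : Set A)) := by
    rw [hstrong, neg_add_cancel]
    exact SetLike.one_mem_graded 𝒜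
  obtain ⟨m, s, t, hs, ht, hst⟩ := AddSubgroup.exists_fin_sum_mul_eq_of_mem_closure_mul hone
  refine ⟨m, LinearMap.pi fun i => LinearMap.toSpanSingleton A A (s i),
    Fintype.linearCombination A t, fun _ _ => pi_toSpanSingleton_mem_graded hs,
    fun _ _ => linearCombination_mem_graded ht, ?_⟩
  rw [Fintype.linearCombination_comp_pi_toSpanSingleton, hst]
  ext
  simp
end
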